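/- For a meromorphic function f in class B (bounded singular set) and R₀ large enough that Sing(f⁻¹) ⊂ D(0,R₀), if additionally ∞ is not an asymptotic value of f, then f restricted to any component U of f⁻¹({z : |z| > R₀} ∪ {∞}) containing exactly one simple pole is a conformal bijection onto {z : |z| > R₀} ∪ {∞}. -/

import Mathlib

/-!
Replace `f` by its reciprocal `g = 1/f`, with the value `0` filled in at the pole. Because the
pole is simple and `f` has no critical points, `g` is holomorphic on `U` with nonvanishing
derivative, hence a local homeomorphism. It maps `U` into the disc `D = D(0, 1/R₀)` and `∂U`
onto the circle `|w| = 1/R₀`. Since `closure U` is compact, `g : U → D` is proper. So the sets of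
points of `D` with at most one preimage and with at least two preimages are both open, and
`g(U)` is open and closed in `D`. As `D` is connected and `0` has only the pole as preimage, `g`
maps `U` bijectively onto `D`, and `f = 1/g` maps `U ∖ {z₀}` bijectively onto `|w| > R₀`.
-/

open Filter Topology Set Function Metric

section FiberCount

variable {E X : Type*} [TopologicalSpace E] [TopologicalSpace X] {g : E → X} {U : Set E}
  {D : Set X}

lemma eventually_inter_preimage_singleton_subset [T2Space X] (hK : IsCompact (closure U))
    (hg : ContinuousOn g (closure U)) (hfr : MapsTo g (frontier U) Dᶜ) {V : Set E}
    (hV : IsOpen V) {w : X} (hw : w ∈ D) (hfib : U ∩ g ⁻¹' {w} ⊆ V) :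
    ∀ᶠ w' in 𝓝 w, U ∩ g ⁻¹' {w'} ⊆ V := by
  have hw' : w ∉ g '' (closure U \ V) := by
    rintro ⟨y, ⟨hyU, hyV⟩, rfl⟩
    by_cases hy : y ∈ U
    · exact hyV (hfib ⟨hy, rfl⟩)
    · exact hfr ⟨hyU, fun h => hy (interior_subset h)⟩ hw
  have hclosed : IsClosed (g '' (closure U \ V)) :=
    ((hK.diff hV).image_of_continuousOn (hg.mono sdiff_subset)).isClosed
  filter_upwards [hclosed.isOpen_compl.mem_nhds hw'] with w' hw' z ⟨hzU, hz⟩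
  by_contra hzV
  exact hw' ⟨z, ⟨subset_closure hzU, hzV⟩, hz⟩

lemma isOpen_inter_setOf_subsingleton_fiber [T2Space X] (hK : IsCompact (closure U))
    (hg : ContinuousOn g (closure U)) (hfr : MapsTo g (frontier U) Dᶜ) (hD : IsOpen D)
    (hloc : IsLocalHomeomorphOn g U) :
    IsOpen (D ∩ {w | (U ∩ g ⁻¹' {w}).Subsingleton}) := by
  refine isOpen_iff_mem_nhds.mpr fun w ⟨hwD, hsub⟩ => ?_
  obtain ⟨V, hVo, hVinj, hfibV⟩ : ∃ V, IsOpen V ∧ InjOn g V ∧ U ∩ g ⁻¹' {w} ⊆ V := by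
    rcases (U ∩ g ⁻¹' {w}).eq_empty_or_nonempty with h | ⟨z, hz⟩
    · exact ⟨∅, isOpen_empty, injOn_empty g, h.subset⟩
    · obtain ⟨e, hze, rfl⟩ := hloc z hz.1
      exact ⟨e.source, e.open_source, e.injOn, fun x hx => hsub hx hz ▸ hze⟩
  filter_upwards [eventually_inter_preimage_singleton_subset hK hg hfr hVo hwD hfibV,
    hD.mem_nhds hwD] with w' hfib' hw'D
  exact ⟨hw'D, fun a ha b hb => hVinj (hfib' ha) (hfib' hb) (ha.2.trans hb.2.symm)⟩

lemma isOpen_setOf_not_subsingleton_fiber [T2Space E] (hU : IsOpen U)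
    (hloc : IsLocalHomeomorphOn g U) :
    IsOpen {w | ¬(U ∩ g ⁻¹' {w}).Subsingleton} := by
  refine isOpen_iff_mem_nhds.mpr fun w hw => ?_
  obtain ⟨z₁, hz₁, z₂, hz₂, hne⟩ := not_subsingleton_iff.mp hw
  obtain ⟨t₁, t₂, ht₁, ht₂, hz₁t, hz₂t, hdisj⟩ := t2_separation hne
  have himage : ∀ z ∈ U ∩ g ⁻¹' {w}, ∀ t : Set E, IsOpen t → z ∈ t → g '' (t ∩ U) ∈ 𝓝 w :=
    fun z hz t ht hzt => hz.2 ▸ hloc.map_nhds_eq hz.1 ▸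
      image_mem_map ((ht.inter hU).mem_nhds ⟨hzt, hz.1⟩)
  filter_upwards [himage z₁ hz₁ t₁ ht₁ hz₁t, himage z₂ hz₂ t₂ ht₂ hz₂t]
    with w' ⟨x₁, hx₁, hgx₁⟩ ⟨x₂, hx₂, hgx₂⟩
  exact not_subsingleton_iff.mpr ⟨x₁, ⟨hx₁.2, hgx₁⟩, x₂, ⟨hx₂.2, hgx₂⟩,
    fun h => disjoint_left.mp hdisj hx₁.1 (h ▸ hx₂.1)⟩

lemma injOn_of_subsingleton_fiber [T2Space E] [T2Space X] (hU : IsOpen U)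
    (hK : IsCompact (closure U)) (hg : ContinuousOn g (closure U))
    (hloc : IsLocalHomeomorphOn g U) (hD : IsOpen D) (hDc : IsPreconnected D)
    (hmaps : MapsTo g U D) (hfr : MapsTo g (frontier U) Dᶜ) {w₀ : X} (hw₀ : w₀ ∈ D)
    (hfib : (U ∩ g ⁻¹' {w₀}).Subsingleton) : InjOn g U := by
  have hsub : D ⊆ D ∩ {w | (U ∩ g ⁻¹' {w}).Subsingleton} :=
    hDc.subset_left_of_subset_union (isOpen_inter_setOf_subsingleton_fiber hK hg hfr hD hloc)
      (isOpen_setOf_not_subsingleton_fiber hU hloc)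
      (disjoint_left.mpr fun _ hw hw' => hw' hw.2)
      (fun w hw => (em _).imp (fun h => ⟨hw, h⟩) id) ⟨w₀, hw₀, hw₀, hfib⟩
  exact fun z₁ hz₁ z₂ hz₂ h => (hsub (hmaps hz₁)).2 ⟨hz₁, rfl⟩ ⟨hz₂, h.symm⟩

lemma surjOn_of_isLocalHomeomorphOn [T2Space X] (hU : IsOpen U)
    (hK : IsCompact (closure U)) (hg : ContinuousOn g (closure U))
    (hloc : IsLocalHomeomorphOn g U) (hDc : IsPreconnected D)
    (hmaps : MapsTo g U D) (hfr : MapsTo g (frontier U) Dᶜ) (hne : U.Nonempty) :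
    SurjOn g U D := by
  have hopen : IsOpen (g '' U) := by
    refine isOpen_iff_mem_nhds.mpr ?_
    rintro _ ⟨z, hz, rfl⟩
    exact hloc.map_nhds_eq hz ▸ image_mem_map (hU.mem_nhds hz)
  have hclosed : IsClosed (g '' closure U) := (hK.image_of_continuousOn hg).isClosed
  refine hDc.subset_left_of_subset_union hopen hclosed.isOpen_compl
    (disjoint_compl_right.mono_right (compl_subset_compl.mpr (image_mono subset_closure)))
    ?_ (hne.image g |>.mono ?_)
  · rintro w hw
    by_cases hw' : w ∈ g '' closure U
    · obtain ⟨y, hy, rfl⟩ := hw'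
      by_cases hyU : y ∈ U
      · exact Or.inl ⟨y, hyU, rfl⟩
      · exact absurd hw (hfr ⟨hy, fun h => hyU (interior_subset h)⟩)
    · exact Or.inr hw'
  · rintro _ ⟨z, hz, rfl⟩
    exact ⟨hmaps hz, z, hz, rfl⟩

lemma bijOn_of_isLocalHomeomorphOn [T2Space E] [T2Space X] (hU : IsOpen U)
    (hK : IsCompact (closure U)) (hg : ContinuousOn g (closure U))
    (hloc : IsLocalHomeomorphOn g U) (hD : IsOpen D) (hDc : IsPreconnected D)
    (hmaps : MapsTo g U D) (hfr : MapsTo g (frontier U) Dᶜ) {z₀ : E} (hz₀ : z₀ ∈ U)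
    (hfib : (U ∩ g ⁻¹' {g z₀}).Subsingleton) : BijOn g U D :=
  ⟨hmaps, injOn_of_subsingleton_fiber hU hK hg hloc hD hDc hmaps hfr (hmaps hz₀) hfib,
    surjOn_of_isLocalHomeomorphOn hU hK hg hloc hDc hmaps hfr ⟨z₀, hz₀⟩⟩

end FiberCount

lemma AnalyticOnNhd.isLocalHomeomorphOn {𝕜 : Type*} [NontriviallyNormedField 𝕜]
    [CompleteSpace 𝕜] {g : 𝕜 → 𝕜} {U : Set 𝕜} (hg : AnalyticOnNhd 𝕜 g U)
    (hg' : ∀ z ∈ U, deriv g z ≠ 0) : IsLocalHomeomorphOn g U := fun z hz =>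
  let he := (hg z hz).hasStrictDerivAt.hasStrictFDerivAt_equiv (hg' z hz)
  ⟨he.toOpenPartialHomeomorph g, he.mem_toOpenPartialHomeomorph_source, rfl⟩

lemma IsOpen.disjoint_frontier_connectedComponentIn {α : Type*} [TopologicalSpace α]
    [LocallyConnectedSpace α] {F : Set α} (hF : IsOpen F) (x : α) :
    Disjoint (frontier (connectedComponentIn F x)) F := by
  refine disjoint_left.mpr fun y ⟨hyc, hyU⟩ hyF => hyU ?_
  obtain ⟨z, hzy, hzx⟩ := mem_closure_iff_nhds.mp hyc _
    (connectedComponentIn_mem_nhds (hF.mem_nhds hyF))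
  rw [interior_eq_iff_isOpen.mpr hF.connectedComponentIn, connectedComponentIn_eq hzx,
    ← connectedComponentIn_eq hzy]
  exact mem_connectedComponentIn hyF

lemma isOpen_setOf_mem_or_lt_norm {f : ℂ → ℂ} {S : Set ℂ} (R : ℝ)
    (hf : ∀ z ∉ S, ContinuousAt f z)
    (hpoles : ∀ s ∈ S, Tendsto (fun z => ‖f z‖) (𝓝[≠] s) atTop) :
    IsOpen {z | z ∈ S ∨ R < ‖f z‖} := by
  refine isOpen_iff_mem_nhds.mpr fun z hz => ?_
  by_cases hzS : z ∈ S
  · filter_upwards [eventually_nhdsWithin_iff.mp ((hpoles z hzS).eventually_gt_atTop R)]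
      with w hw
    rcases eq_or_ne w z with rfl | hne
    exacts [Or.inl hzS, Or.inr (hw hne)]
  · exact ((hf z hzS).norm.eventually (eventually_gt_nhds (hz.resolve_left hzS))).mono
      fun _ => Or.inr

lemma bijOn_inv_ball_diff_zero {𝕜 : Type*} [NormedDivisionRing 𝕜] {R : ℝ} (hR : 0 < R) :
    BijOn (·⁻¹) (ball (0 : 𝕜) R⁻¹ \ {0}) {w | R < ‖w‖} := by
  refine InvOn.bijOn ⟨fun w _ => inv_inv w, fun w _ => inv_inv w⟩ ?_ ?_
  · rintro w ⟨hw, hw0 : w ≠ 0⟩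
    rw [mem_ball_zero_iff] at hw
    simpa [norm_inv] using (lt_inv_comm₀ hR (norm_pos_iff.mpr hw0)).mpr hw
  · intro w (hw : R < ‖w‖)
    have hw0 : w ≠ 0 := norm_pos_iff.mp (hR.trans hw)
    exact ⟨by simpa [norm_inv] using inv_strictAnti₀ hR hw, inv_ne_zero hw0⟩

section Reciprocal

variable {𝕜 : Type*} [NontriviallyNormedField 𝕜] [DecidableEq 𝕜] {f : 𝕜 → 𝕜} {z₀ : 𝕜}

lemma hasDerivAt_update_inv_of_tendsto_sub_mul {b : 𝕜} (hb : b ≠ 0)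
    (h : Tendsto (fun z => (z - z₀) * f z) (𝓝[≠] z₀) (𝓝 b)) :
    HasDerivAt (update f⁻¹ z₀ 0) b⁻¹ z₀ := by
  refine hasDerivAt_iff_tendsto_slope.mpr ((h.inv₀ hb).congr' ?_)
  filter_upwards [self_mem_nhdsWithin] with z (hz : z ≠ z₀)
  rw [slope_def_field, update_self, update_of_ne hz, sub_zero, Pi.inv_apply, mul_inv,
    div_eq_inv_mul]

lemma update_inv_eventuallyEq {z : 𝕜} (hz : z ≠ z₀) : update f⁻¹ z₀ 0 =ᶠ[𝓝 z] f⁻¹ := by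
  filter_upwards [compl_singleton_mem_nhds hz] with w hw
  exact update_of_ne hw _ _

lemma bijOn_of_bijOn_update_inv {U : Set 𝕜} {R : ℝ} (hR : 0 < R)
    (h : BijOn (update f⁻¹ z₀ 0) U (ball 0 R⁻¹)) (hz₀ : z₀ ∈ U) :
    BijOn f (U \ {z₀}) {w | R < ‖w‖} := by
  have h' := h.sdiff_singleton hz₀
  rw [update_self] at h'
  refine ((bijOn_inv_ball_diff_zero hR).comp h').congr fun z hz => ?_
  simp [update_of_ne hz.2]

end Reciprocal

section SimplePole

variable {f : ℂ → ℂ} {U : Set ℂ} {z₀ b : ℂ}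

lemma isLocalHomeomorphOn_update_inv (hU : IsOpen U) (hb : b ≠ 0)
    (hpole : Tendsto (fun z => (z - z₀) * f z) (𝓝[≠] z₀) (𝓝 b))
    (hf : ∀ z ∈ U \ {z₀}, AnalyticAt ℂ f z ∧ f z ≠ 0 ∧ deriv f z ≠ 0) :
    IsLocalHomeomorphOn (update f⁻¹ z₀ 0) U := by
  have hder₀ := hasDerivAt_update_inv_of_tendsto_sub_mul hb hpole
  have hpunct : ∀ z ∈ U \ {z₀}, AnalyticAt ℂ (update f⁻¹ z₀ 0) z := fun z hz =>
    ((hf z hz).1.inv (hf z hz).2.1).congr (update_inv_eventuallyEq hz.2).symm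
  refine AnalyticOnNhd.isLocalHomeomorphOn (fun z hz => ?_) fun z hz => ?_
  · rcases eq_or_ne z z₀ with rfl | hz'
    · refine Complex.analyticAt_iff_eventually_differentiableAt.mpr ?_
      filter_upwards [hU.mem_nhds hz] with w hw
      rcases eq_or_ne w z with rfl | hw'
      exacts [hder₀.differentiableAt, (hpunct w ⟨hw, hw'⟩).differentiableAt]
    · exact hpunct z ⟨hz, hz'⟩
  · rcases eq_or_ne z z₀ with rfl | hz'
    · exact hder₀.deriv ▸ inv_ne_zero hb
    · obtain ⟨hfa, hfz, hf'⟩ := hf z ⟨hz, hz'⟩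
      rw [(update_inv_eventuallyEq hz').deriv_eq, deriv_inv'' hfa.differentiableAt hfz]
      exact div_ne_zero (neg_ne_zero.mpr hf') (pow_ne_zero 2 hfz)

theorem bijOn_of_simple_pole {R : ℝ} (hR : 0 < R) (hU : IsOpen U)
    (hK : IsCompact (closure U)) (hz₀ : z₀ ∈ U) (hb : b ≠ 0)
    (hpole : Tendsto (fun z => (z - z₀) * f z) (𝓝[≠] z₀) (𝓝 b))
    (hf : ∀ z ∈ U \ {z₀}, AnalyticAt ℂ f z ∧ R < ‖f z‖ ∧ deriv f z ≠ 0)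
    (hfr : ∀ y ∈ frontier U, ContinuousAt f y ∧ ‖f y‖ = R) :
    BijOn f (U \ {z₀}) {w | R < ‖w‖} := by
  have hfne : ∀ z ∈ U \ {z₀}, f z ≠ 0 := fun z hz => norm_pos_iff.mp (hR.trans (hf z hz).2.1)
  have hloc := isLocalHomeomorphOn_update_inv hU hb hpole fun z hz =>
    ⟨(hf z hz).1, hfne z hz, (hf z hz).2.2⟩
  have hfr₀ : ∀ y ∈ frontier U, y ≠ z₀ := fun y hy h =>
    hU.inter_frontier_eq.subset ⟨h ▸ hz₀, hy⟩
  have hcont : ContinuousOn (update f⁻¹ z₀ 0) (closure U) := by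
    rw [closure_eq_self_union_frontier]
    rintro y (hy | hy)
    · exact (hloc.continuousAt hy).continuousWithinAt
    · have hfy : f y ≠ 0 := norm_pos_iff.mp ((hfr y hy).2 ▸ hR)
      exact (((hfr y hy).1.inv₀ hfy).congr_of_eventuallyEq
        (update_inv_eventuallyEq (hfr₀ y hy))).continuousWithinAt
  have hmaps : MapsTo (update f⁻¹ z₀ 0) U (ball 0 R⁻¹) := by
    intro z hz
    rcases eq_or_ne z z₀ with rfl | hz'
    · simpa using hR
    · simpa [update_of_ne hz', norm_inv] using inv_strictAnti₀ hR (hf z ⟨hz, hz'⟩).2.1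
  have hfrmaps : MapsTo (update f⁻¹ z₀ 0) (frontier U) (ball 0 R⁻¹)ᶜ := fun y hy => by
    simp [update_of_ne (hfr₀ y hy), norm_inv, (hfr y hy).2]
  have hfib : (U ∩ update f⁻¹ z₀ 0 ⁻¹' {update f⁻¹ z₀ 0 z₀}).Subsingleton := by
    refine subsingleton_of_forall_eq z₀ fun z ⟨hz, hgz⟩ => by_contra fun hz' => ?_
    simp only [mem_preimage, mem_singleton_iff, update_self, update_of_ne hz', Pi.inv_apply,
      inv_eq_zero] at hgz
    exact hfne z ⟨hz, hz'⟩ hgz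
  exact bijOn_of_bijOn_update_inv hR (bijOn_of_isLocalHomeomorphOn hU hK hcont hloc isOpen_ball
    (convex_ball 0 _).isPreconnected hmaps hfrmaps hz₀ hfib) hz₀

end SimplePole

section PoleComponent

variable {f : ℂ → ℂ} {S : Set ℂ} {R : ℝ} {z₀ : ℂ} {U : Set ℂ}

lemma notMem_and_lt_norm_of_mem_diff (hUA : U ⊆ {z | z ∈ S ∨ R < ‖f z‖})
    (honepole : U ∩ S = {z₀}) {z : ℂ} (hz : z ∈ U \ {z₀}) : z ∉ S ∧ R < ‖f z‖ :=
  have hzS : z ∉ S := fun h => hz.2 (honepole ▸ ⟨hz.1, h⟩)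
  ⟨hzS, (hUA hz.1).resolve_left hzS⟩

lemma notMem_and_norm_eq_of_mem_frontier (hf : ∀ z ∉ S, ContinuousAt f z) (hU : IsOpen U)
    (hz₀ : z₀ ∈ U) (hUA : U ⊆ {z | z ∈ S ∨ R < ‖f z‖}) (honepole : U ∩ S = {z₀})
    (hfrA : Disjoint (frontier U) {z | z ∈ S ∨ R < ‖f z‖}) {y : ℂ} (hy : y ∈ frontier U) :
    y ∉ S ∧ ‖f y‖ = R := by
  have hyA := disjoint_left.mp hfrA hy
  have hyS : y ∉ S := fun h => hyA (Or.inl h)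
  have hy₀ : y ∈ closure (U \ {z₀}) :=
    isOpen_compl_singleton.closure_inter ⟨frontier_subset_closure hy,
      fun h => hU.inter_frontier_eq.subset ⟨(mem_singleton_iff.mp h) ▸ hz₀, hy⟩⟩
  have hclosure : closure (f '' (U \ {z₀})) ⊆ {w | R ≤ ‖w‖} :=
    closure_minimal (image_subset_iff.mpr fun z hz =>
      (notMem_and_lt_norm_of_mem_diff hUA honepole hz).2.le)
      (isClosed_le continuous_const continuous_norm)
  exact ⟨hyS, le_antisymm (not_lt.mp fun h => hyA (Or.inr h))
    (hclosure ((hf y hyS).continuousWithinAt.mem_closure_image hy₀))⟩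

end PoleComponent

theorem restriction_to_pole_component_bijective_general (f : ℂ → ℂ) (S : Set ℂ) (R₀ : ℝ)
    (hR₀ : 0 < R₀)
    (hf : ∀ z ∈ Sᶜ, AnalyticAt ℂ f z)
    (hpoles : ∀ s ∈ S, Tendsto (fun z => ‖f z‖) (𝓝[≠] s) atTop)
    (z₀ : ℂ) (hz₀ : z₀ ∈ S)
    (U : Set ℂ)
    (hU : U = connectedComponentIn {z : ℂ | z ∈ S ∨ R₀ < ‖f z‖} z₀)
    (honepole : U ∩ S = {z₀})
    (hbounded : Bornology.IsBounded U)
    (hsimple : ∃ b : ℂ, b ≠ 0 ∧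
      Tendsto (fun z => (z - z₀) * f z) (𝓝[≠] z₀) (𝓝 b))
    (hnocrit : ∀ z ∈ U \ {z₀}, deriv f z ≠ 0) :
    Set.BijOn f (U \ {z₀}) {w : ℂ | R₀ < ‖w‖} := by
  have hfc : ∀ z ∉ S, ContinuousAt f z := fun z hz => (hf z hz).continuousAt
  have hA := isOpen_setOf_mem_or_lt_norm R₀ hfc hpoles
  have hUo : IsOpen U := hU ▸ hA.connectedComponentIn
  have hz₀U : z₀ ∈ U := hU ▸ mem_connectedComponentIn (Or.inl hz₀)
  have hUA : U ⊆ {z | z ∈ S ∨ R₀ < ‖f z‖} := hU ▸ connectedComponentIn_subset _ _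
  have hfrA := hU ▸ hA.disjoint_frontier_connectedComponentIn z₀
  obtain ⟨b, hb, hpole⟩ := hsimple
  refine bijOn_of_simple_pole hR₀ hUo hbounded.isCompact_closure hz₀U hb hpole
    (fun z hz => ?_) fun y hy => ?_
  · obtain ⟨hzS, hlt⟩ := notMem_and_lt_norm_of_mem_diff hUA honepole hz
    exact ⟨hf z hzS, hlt, hnocrit z hz⟩
  · obtain ⟨hyS, heq⟩ := notMem_and_norm_eq_of_mem_frontier hfc hUo hz₀U hUA honepole hfrA hy
    exact ⟨hfc y hyS, heq⟩

/-- For a meromorphic function `f` (holomorphic off its pole set `S`, with `|f| → ∞` at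
each pole) and `R₀` large, let `U` be a bounded, simply connected component of the
preimage of `B(R₀) = {w : |w| > R₀} ∪ {∞}` containing exactly one pole `z₀`, which is
simple; if `f` has no critical points in `U`, and `∞` is not an asymptotic value (so
that `U` is indeed such a bounded component), then `f` restricted to `U ∖ {z₀}` is a
conformal bijection onto `{w : |w| > R₀}`. -/
theorem restriction_to_pole_component_bijective (f : ℂ → ℂ) (S : Set ℂ) (R₀ : ℝ)
    (hR₀ : 0 < R₀)
    (hf : ∀ z ∈ Sᶜ, AnalyticAt ℂ f z)
    (hpoles : ∀ s ∈ S, Tendsto (fun z => ‖f z‖) (𝓝[≠] s) atTop)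
    (z₀ : ℂ) (hz₀ : z₀ ∈ S)
    (U : Set ℂ)
    (hU : U = connectedComponentIn {z : ℂ | z ∈ S ∨ R₀ < ‖f z‖} z₀)
    (honepole : U ∩ S = {z₀})
    (hbounded : Bornology.IsBounded U)
    (hsc : SimplyConnectedSpace U)
    (hsimple : ∃ b : ℂ, b ≠ 0 ∧
      Tendsto (fun z => (z - z₀) * f z) (𝓝[≠] z₀) (𝓝 b))
    (hnocrit : ∀ z ∈ U \ {z₀}, deriv f z ≠ 0) :
    Set.BijOn f (U \ {z₀}) {w : ℂ | R₀ < ‖w‖} :=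
  restriction_to_pole_component_bijective_general f S R₀ hR₀ hf hpoles z₀ hz₀ U hU honepole hbounded
    hsimple hnocrit
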